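/- Let K be a star-continuous partially additive Kleene algebra and let TK be the set of finitely generated star-ideals of K, with operations ⟨A⟩ + ⟨B⟩ = ⟨A ∪ B⟩, ⟨A⟩ · ⟨B⟩ = ⟨A ⊙ B⟩, ⟨{a_1,…,a_k}⟩* = ⟨(a_1*·…·a_k*)*⟩, 0 = ⟨0⟩, 1 = ⟨1⟩. Then TK is a star-continuous (total) Kleene algebra; in particular, in TK the ordering is subset inclusion, 1 + I·I* ≤ I*, J + I·K ≤ K implies I*·J ≤ K, and I·J^n·K ≤ L for all n implies I·J*·K ≤ L. -/

import Mathlib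

/-- A partially additive Kleene algebra: partial `+` (via `summable`), total `·`, `*`,
constants 0 and 1, satisfying the PKA axioms. -/
structure PKA (K : Type*) where
  summable : K → K → Prop
  add : K → K → K
  mul : K → K → K
  star : K → K
  zero : K
  one : K
  add_assoc : ∀ x y z, summable x y → summable (add x y) z → summable y z →
    summable x (add y z) ∧ add (add x y) z = add x (add y z)
  add_comm : ∀ x y, summable x y → summable y x ∧ add x y = add y x
  summable_zero : ∀ x, summable x zero
  add_zero : ∀ x, add x zero = x
  summable_self : ∀ x, summable x x
  add_self : ∀ x, add x x = x
  mul_assoc : ∀ x y z, mul x (mul y z) = mul (mul x y) z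
  one_mul : ∀ x, mul one x = x
  mul_one : ∀ x, mul x one = x
  left_distrib : ∀ x y z, summable x y →
    summable (mul z x) (mul z y) ∧ mul z (add x y) = add (mul z x) (mul z y)
  right_distrib : ∀ x y z, summable x y →
    summable (mul x z) (mul y z) ∧ mul (add x y) z = add (mul x z) (mul y z)
  zero_mul : ∀ x, mul zero x = zero
  mul_zero : ∀ x, mul x zero = zero
  one_le_star : ∀ x, summable one (star x) ∧ add one (star x) = star x
  mul_star_le_star : ∀ x,
    summable (mul x (star x)) (star x) ∧ add (mul x (star x)) (star x) = star x
  star_mul_le_star : ∀ x,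
    summable (mul (star x) x) (star x) ∧ add (mul (star x) x) (star x) = star x
  star_ind_left : ∀ a x, (summable (mul a x) x ∧ add (mul a x) x = x) →
    summable (mul (star a) x) x ∧ add (mul (star a) x) x = x
  star_ind_right : ∀ a x, (summable (mul x a) x ∧ add (mul x a) x = x) →
    summable (mul x (star a)) x ∧ add (mul x (star a)) x = x

/-- The natural order on a PKA: `a ≤ b` iff `a` is summable with `b` and `a + b = b`. -/
def PKA.le {K : Type*} (P : PKA K) (a b : K) : Prop :=
  P.summable a b ∧ P.add a b = b

/-- Powers: `b^0 = 1`, `b^(n+1) = b·b^n`. -/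
def PKA.pow {K : Type*} (P : PKA K) (b : K) : ℕ → K
  | 0 => P.one
  | n + 1 => P.mul b (P.pow b n)

/-- Star-continuity: `a·b*·c` is the least upper bound of `{a·b^n·c | n < ω}`. -/
def PKA.StarContinuous {K : Type*} (P : PKA K) : Prop :=
  ∀ a b c,
    (∀ n, P.le (P.mul a (P.mul (P.pow b n) c)) (P.mul a (P.mul (P.star b) c))) ∧
    (∀ w, (∀ n, P.le (P.mul a (P.mul (P.pow b n) c)) w) →
      P.le (P.mul a (P.mul (P.star b) c)) w)

/-- A star-ideal: nonempty, closed under defined sums, downward closed,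
and closed under the star rule. -/
def PKA.IsStarIdeal {K : Type*} (P : PKA K) (A : Set K) : Prop :=
  A.Nonempty ∧
  (∀ a ∈ A, ∀ b ∈ A, P.summable a b → P.add a b ∈ A) ∧
  (∀ x y, y ∈ A → P.le x y → x ∈ A) ∧
  (∀ a b c, (∀ n, P.mul a (P.mul (P.pow b n) c) ∈ A) →
    P.mul a (P.mul (P.star b) c) ∈ A)

/-- The star-ideal generated by `A`: the intersection of all star-ideals containing `A`. -/
def PKA.gen {K : Type*} (P : PKA K) (A : Set K) : Set K :=
  ⋂₀ {I | P.IsStarIdeal I ∧ A ⊆ I}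

/-- (a_1 * · … · a_k *) * for a finite list of generators. -/
def PKA.listStar {K : Type*} (P : PKA K) (l : List K) : K :=
  P.star (l.foldr (fun x acc => P.mul (P.star x) acc) P.one)

/-!
By star-continuity every principal downset is a star-ideal, so `⟨a₁, …, aₖ⟩` lies below
`(a₁*·…·aₖ*)*`. Hence `⟨A⟩*` can be taken to be the star-ideal generated by all
`(b₁*·…·bₘ*)*` with every `bᵢ ∈ A`: for `A = {a₁, …, aₖ}` this is `⟨(a₁*·…·aₖ*)*⟩`, and it
does not depend on the generators. Since `⟨A⟩ ⊆ C` iff `A ⊆ C` for a star-ideal `C`, and the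
preimage of a star-ideal under a one-sided multiplication is again a star-ideal, every Kleene
algebra law of `TK` reduces to a statement about generators. The star laws reduce to one fact:
if `a·w·c ∈ N` for all finite products `w` of elements of `S`, then `a·(b₁*·…·bₘ*)*·c ∈ N`
whenever all `bᵢ ∈ S`, by one application of the star rule of `N` for every star.
-/

theorem Set.Finite.exists_list_eq {α : Type*} {A : Set α} (hA : A.Finite) :
    ∃ l : List α, {x | x ∈ l} = A := by
  obtain ⟨s, rfl⟩ := hA.exists_finset_coe
  exact ⟨s.toList, by ext; simp⟩

namespace PKA

variable {K : Type*} (P : PKA K)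

theorem le_trans {a b c : K} (hab : P.le a b) (hbc : P.le b c) : P.le a c := by
  obtain ⟨sab, eab⟩ := hab
  obtain ⟨sbc, ebc⟩ := hbc
  obtain ⟨s, e⟩ := P.add_assoc a b c sab (by rwa [eab]) sbc
  rw [eab, ebc] at e
  rw [ebc] at s
  exact ⟨s, e.symm⟩

theorem zero_le (a : K) : P.le P.zero a := by
  obtain ⟨s, e⟩ := P.add_comm a P.zero (P.summable_zero a)
  exact ⟨s, e ▸ P.add_zero a⟩

theorem le_add_left {a b : K} (s : P.summable a b) : P.le a (P.add a b) := by
  obtain ⟨s', e⟩ := P.add_assoc a a b (P.summable_self a) ((P.add_self a).symm ▸ s) s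
  rw [P.add_self] at e
  exact ⟨s', e.symm⟩

theorem le_add_right {a b : K} (s : P.summable a b) : P.le b (P.add a b) := by
  obtain ⟨s', e⟩ := P.add_comm a b s
  exact e ▸ P.le_add_left s'

theorem add_le {a b c : K} (hac : P.le a c) (hbc : P.le b c) (s : P.summable a b) :
    P.le (P.add a b) c := by
  obtain ⟨sac, eac⟩ := hac
  obtain ⟨sbc, ebc⟩ := hbc
  obtain ⟨sca, eca⟩ := P.add_comm a c sac
  obtain ⟨scb, ecb⟩ := P.add_comm b c sbc
  rw [eac] at eca
  rw [ebc] at ecb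
  obtain ⟨s', e⟩ := P.add_assoc c a b sca (eca ▸ scb) s
  rw [← eca, ← ecb] at e
  obtain ⟨s'', e'⟩ := P.add_comm c (P.add a b) s'
  exact ⟨s'', by rw [← e', ← e]⟩

theorem mul_le_mul_left (a : K) {b c : K} (h : P.le b c) : P.le (P.mul a b) (P.mul a c) := by
  obtain ⟨s, e⟩ := P.left_distrib b c a h.1
  exact ⟨s, by rw [← e, h.2]⟩

theorem mul_le_mul_right {a b : K} (h : P.le a b) (c : K) : P.le (P.mul a c) (P.mul b c) := by
  obtain ⟨s, e⟩ := P.right_distrib a b c h.1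
  exact ⟨s, by rw [← e, h.2]⟩

theorem mul_le_mul {a b c d : K} (hab : P.le a b) (hcd : P.le c d) :
    P.le (P.mul a c) (P.mul b d) :=
  P.le_trans (P.mul_le_mul_right hab c) (P.mul_le_mul_left b hcd)

theorem le_star (a : K) : P.le a (P.star a) := by
  have h := P.mul_le_mul_left a (P.one_le_star a)
  rw [P.mul_one] at h
  exact P.le_trans h (P.mul_star_le_star a)

theorem star_mul_star_le (a : K) : P.le (P.mul (P.star a) (P.star a)) (P.star a) :=
  P.star_ind_left a (P.star a) (P.mul_star_le_star a)

theorem star_le_star_of_le_star {a b : K} (h : P.le a (P.star b)) :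
    P.le (P.star a) (P.star b) := by
  have hab := P.star_ind_left a (P.star b)
    (P.le_trans (P.mul_le_mul_right h _) (P.star_mul_star_le b))
  have h1 := P.mul_le_mul_left (P.star a) (P.one_le_star b)
  rw [P.mul_one] at h1
  exact P.le_trans h1 hab

theorem pow_le_star (b : K) (n : ℕ) : P.le (P.pow b n) (P.star b) := by
  induction n with
  | zero => exact P.one_le_star b
  | succ n ih => exact P.le_trans (P.mul_le_mul_left b ih) (P.mul_star_le_star b)

theorem star_mul_le_of_add_mul_le {i j l : K} (s : P.summable j (P.mul i l))
    (h : P.le (P.add j (P.mul i l)) l) : P.le (P.mul (P.star i) j) l :=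
  P.le_trans (P.mul_le_mul_left _ (P.le_trans (P.le_add_left s) h))
    (P.star_ind_left i l (P.le_trans (P.le_add_right s) h))

def starProd (l : List K) : K := l.foldr (fun x acc => P.mul (P.star x) acc) P.one

theorem listStar_eq_star_starProd (l : List K) : P.listStar l = P.star (P.starProd l) := rfl

theorem starProd_nil : P.starProd [] = P.one := rfl

theorem starProd_cons (x : K) (l : List K) :
    P.starProd (x :: l) = P.mul (P.star x) (P.starProd l) := rfl

theorem one_le_starProd (l : List K) : P.le P.one (P.starProd l) := by
  induction l with
  | nil => exact ⟨P.summable_self _, P.add_self _⟩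
  | cons x l ih => simpa only [starProd_cons, P.one_mul] using P.mul_le_mul (P.one_le_star x) ih

theorem star_le_starProd {x : K} {l : List K} (hx : x ∈ l) :
    P.le (P.star x) (P.starProd l) := by
  induction l with
  | nil => cases hx
  | cons y l ih =>
    rw [starProd_cons]
    rcases List.mem_cons.1 hx with rfl | hx
    · simpa only [P.mul_one] using P.mul_le_mul_left (P.star x) (P.one_le_starProd l)
    · simpa only [P.one_mul] using P.mul_le_mul (P.one_le_star y) (ih hx)

theorem le_listStar {x : K} {l : List K} (hx : x ∈ l) : P.le x (P.listStar l) :=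
  P.le_trans (P.le_star x) (P.le_trans (P.star_le_starProd hx) (P.le_star _))

theorem listStar_le_star {l : List K} {s : K} (h : ∀ y ∈ l, P.le y (P.star s)) :
    P.le (P.listStar l) (P.star s) := by
  refine P.star_le_star_of_le_star ?_
  induction l with
  | nil => exact P.one_le_star s
  | cons y l ih =>
    exact P.le_trans (P.mul_le_mul (P.star_le_star_of_le_star (h y List.mem_cons_self))
      (ih fun z hz => h z (List.mem_cons_of_mem y hz))) (P.star_mul_star_le s)

theorem listStar_mono {l m : List K} (h : l ⊆ m) : P.le (P.listStar l) (P.listStar m) :=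
  P.listStar_le_star fun _ hy => P.le_listStar (h hy)

theorem mul_le_listStar {a b : K} {l : List K} (ha : P.le a (P.listStar l))
    (hb : P.le b (P.listStar l)) : P.le (P.mul a b) (P.listStar l) :=
  P.le_trans (P.mul_le_mul ha hb) (P.star_mul_star_le _)

variable {P}

theorem IsStarIdeal.add_mem {A : Set K} (hA : P.IsStarIdeal A) {a b : K} (ha : a ∈ A)
    (hb : b ∈ A) (s : P.summable a b) : P.add a b ∈ A :=
  hA.2.1 a ha b hb s

theorem IsStarIdeal.mem_of_le {A : Set K} (hA : P.IsStarIdeal A) {a b : K} (hb : b ∈ A)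
    (h : P.le a b) : a ∈ A :=
  hA.2.2.1 a b hb h

theorem IsStarIdeal.mul_star_mul_mem {A : Set K} (hA : P.IsStarIdeal A) {a b c : K}
    (h : ∀ n, P.mul a (P.mul (P.pow b n) c) ∈ A) : P.mul a (P.mul (P.star b) c) ∈ A :=
  hA.2.2.2 a b c h

theorem IsStarIdeal.zero_mem {A : Set K} (hA : P.IsStarIdeal A) : P.zero ∈ A :=
  let ⟨_, ha⟩ := hA.1
  hA.mem_of_le ha (P.zero_le _)

theorem isStarIdeal_setOf_le (hc : P.StarContinuous) (t : K) : P.IsStarIdeal {x | P.le x t} :=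
  ⟨⟨P.zero, P.zero_le t⟩, fun _ ha _ hb s => P.add_le ha hb s,
    fun _ _ hy hxy => P.le_trans hxy hy, fun a b c h => (hc a b c).2 t h⟩

theorem IsStarIdeal.preimage_mul_left {C : Set K} (hC : P.IsStarIdeal C) (a : K) :
    P.IsStarIdeal {b | P.mul a b ∈ C} := by
  refine ⟨⟨P.zero, by simpa only [Set.mem_ofPred_eq, P.mul_zero] using hC.zero_mem⟩,
    fun b hb b' hb' s => ?_, fun x y hy hxy => hC.mem_of_le hy (P.mul_le_mul_left a hxy),
    fun u v w h => ?_⟩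
  · obtain ⟨s', e⟩ := P.left_distrib b b' a s
    exact (congrArg (· ∈ C) e).mpr (hC.add_mem hb hb' s')
  · simpa only [Set.mem_ofPred_eq, P.mul_assoc] using
      hC.mul_star_mul_mem (a := P.mul a u) (b := v) (c := w)
        (fun n => by simpa only [Set.mem_ofPred_eq, P.mul_assoc] using h n)

theorem IsStarIdeal.preimage_mul_right {C : Set K} (hC : P.IsStarIdeal C) (b : K) :
    P.IsStarIdeal {a | P.mul a b ∈ C} := by
  refine ⟨⟨P.zero, by simpa only [Set.mem_ofPred_eq, P.zero_mul] using hC.zero_mem⟩,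
    fun a ha a' ha' s => ?_, fun x y hy hxy => hC.mem_of_le hy (P.mul_le_mul_right hxy b),
    fun u v w h => ?_⟩
  · obtain ⟨s', e⟩ := P.right_distrib a a' b s
    exact (congrArg (· ∈ C) e).mpr (hC.add_mem ha ha' s')
  · have key := hC.mul_star_mul_mem (a := u) (b := v) (c := P.mul w b)
      (fun n => by simpa only [Set.mem_ofPred_eq, P.mul_assoc] using h n)
    simpa only [Set.mem_ofPred_eq, P.mul_assoc] using key

variable (P)

theorem isStarIdeal_gen (A : Set K) : P.IsStarIdeal (P.gen A) :=
  ⟨⟨P.zero, fun _ hI => hI.1.zero_mem⟩,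
    fun _ ha _ hb s _ hI => hI.1.add_mem (ha _ hI) (hb _ hI) s,
    fun _ _ hy hxy _ hI => hI.1.mem_of_le (hy _ hI) hxy,
    fun _ _ _ h _ hI => hI.1.mul_star_mul_mem fun n => h n _ hI⟩

theorem subset_gen (A : Set K) : A ⊆ P.gen A :=
  fun _ hx _ hI => hI.2 hx

variable {P}

theorem IsStarIdeal.gen_subset {A I : Set K} (hI : P.IsStarIdeal I) (h : A ⊆ I) :
    P.gen A ⊆ I :=
  fun _ hx => hx I ⟨hI, h⟩

theorem IsStarIdeal.gen_eq {I : Set K} (hI : P.IsStarIdeal I) : P.gen I = I :=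
  (hI.gen_subset subset_rfl).antisymm (P.subset_gen I)

variable (P)

theorem gen_mono {A B : Set K} (h : A ⊆ B) : P.gen A ⊆ P.gen B :=
  (P.isStarIdeal_gen B).gen_subset (h.trans (P.subset_gen B))

theorem gen_union_gen_left (A B : Set K) : P.gen (P.gen A ∪ B) = P.gen (A ∪ B) :=
  ((P.isStarIdeal_gen _).gen_subset (Set.union_subset
    (P.gen_mono Set.subset_union_left) (Set.subset_union_right.trans (P.subset_gen _)))).antisymm
    (P.gen_mono (Set.union_subset_union_left B (P.subset_gen A)))

theorem gen_union_gen_right (A B : Set K) : P.gen (A ∪ P.gen B) = P.gen (A ∪ B) := by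
  rw [Set.union_comm, gen_union_gen_left, Set.union_comm]

variable {P}

theorem IsStarIdeal.image2_gen_left_subset {A B C : Set K} (hC : P.IsStarIdeal C)
    (h : Set.image2 P.mul A B ⊆ C) : Set.image2 P.mul (P.gen A) B ⊆ C := by
  rintro _ ⟨a, ha, b, hb, rfl⟩
  exact (hC.preimage_mul_right b).gen_subset (fun x hx => h (Set.mem_image2_of_mem hx hb)) ha

theorem IsStarIdeal.image2_gen_right_subset {A B C : Set K} (hC : P.IsStarIdeal C)
    (h : Set.image2 P.mul A B ⊆ C) : Set.image2 P.mul A (P.gen B) ⊆ C := by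
  rintro _ ⟨a, ha, b, hb, rfl⟩
  exact (hC.preimage_mul_left a).gen_subset (fun x hx => h (Set.mem_image2_of_mem ha hx)) hb

variable (P)

theorem gen_image2_gen_left (A B : Set K) :
    P.gen (Set.image2 P.mul (P.gen A) B) = P.gen (Set.image2 P.mul A B) :=
  ((P.isStarIdeal_gen _).gen_subset
    ((P.isStarIdeal_gen _).image2_gen_left_subset (P.subset_gen _))).antisymm
    (P.gen_mono (Set.image2_subset_right (P.subset_gen A)))

theorem gen_image2_gen_right (A B : Set K) :
    P.gen (Set.image2 P.mul A (P.gen B)) = P.gen (Set.image2 P.mul A B) :=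
  ((P.isStarIdeal_gen _).gen_subset
    ((P.isStarIdeal_gen _).image2_gen_right_subset (P.subset_gen _))).antisymm
    (P.gen_mono (Set.image2_subset_left (P.subset_gen B)))

inductive IsWordOver (S : Set K) : K → Prop
  | one : IsWordOver S P.one
  | mul {x p : K} : x ∈ S → IsWordOver S p → IsWordOver S (P.mul x p)

variable {P}

theorem IsWordOver.mul_word {S : Set K} {p q : K} (hp : P.IsWordOver S p)
    (hq : P.IsWordOver S q) : P.IsWordOver S (P.mul p q) := by
  induction hp with
  | one => rwa [P.one_mul]
  | mul hx _ ih => rw [← P.mul_assoc]; exact .mul hx ih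

theorem IsWordOver.pow {S : Set K} {x : K} (hx : x ∈ S) (n : ℕ) :
    P.IsWordOver S (P.pow x n) := by
  induction n with
  | zero => exact .one
  | succ n ih => exact .mul hx ih

variable (P)

def SandwichMem (N S : Set K) (a c : K) : Prop :=
  ∀ p, P.IsWordOver S p → P.mul a (P.mul p c) ∈ N

variable {P}

theorem SandwichMem.star_mul {N S : Set K} (hN : P.IsStarIdeal N) {a c x : K}
    (h : P.SandwichMem N S a c) (hx : x ∈ S) : P.SandwichMem N S a (P.mul (P.star x) c) :=
  fun p hp => by
    simpa only [P.mul_assoc] using hN.mul_star_mul_mem (a := P.mul a p) (b := x) (c := c)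
      fun n => by simpa only [P.mul_assoc] using h _ (hp.mul_word (.pow hx n))

theorem SandwichMem.starProd_mul {N S : Set K} (hN : P.IsStarIdeal N) {a c : K} {l : List K}
    (hl : ∀ y ∈ l, y ∈ S) (h : P.SandwichMem N S a c) :
    P.SandwichMem N S a (P.mul (P.starProd l) c) := by
  induction l with
  | nil => simpa only [starProd_nil, P.one_mul] using h
  | cons x l ih =>
    simpa only [starProd_cons, P.mul_assoc] using
      (ih fun y hy => hl y (List.mem_cons_of_mem x hy)).star_mul hN (hl x List.mem_cons_self)

theorem SandwichMem.mul_listStar_mul_mem {N S : Set K} (hN : P.IsStarIdeal N) {a c : K}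
    {l : List K} (hl : ∀ y ∈ l, y ∈ S) (h : P.SandwichMem N S a c) :
    P.mul a (P.mul (P.listStar l) c) ∈ N := by
  have pow_mul (n : ℕ) : P.SandwichMem N S a (P.mul (P.pow (P.starProd l) n) c) := by
    induction n with
    | zero => simpa only [PKA.pow, P.one_mul] using h
    | succ n ih => simpa only [PKA.pow, P.mul_assoc] using ih.starProd_mul hN hl
  rw [listStar_eq_star_starProd]
  exact hN.mul_star_mul_mem fun n => by simpa only [P.one_mul] using pow_mul n P.one .one

theorem IsWordOver.mul_mem {A L : Set K} (h : Set.image2 P.mul A L ⊆ L) {p b : K}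
    (hp : P.IsWordOver A p) (hb : b ∈ L) : P.mul p b ∈ L := by
  induction hp with
  | one => rwa [P.one_mul]
  | mul hx _ ih => rw [← P.mul_assoc]; exact h (Set.mem_image2_of_mem hx ih)

theorem IsWordOver.mem_mul {A L : Set K} (h : Set.image2 P.mul L A ⊆ L) {p c : K}
    (hp : P.IsWordOver A p) (hc : c ∈ L) : P.mul c p ∈ L := by
  induction hp generalizing c with
  | one => rwa [P.mul_one]
  | mul hx _ ih => rw [P.mul_assoc]; exact ih (h (Set.mem_image2_of_mem hc hx))

variable (P)

def listStars (A : Set K) : Set K := P.listStar '' {l | ∀ y ∈ l, y ∈ A}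

theorem one_mem_gen_listStars (A : Set K) : P.one ∈ P.gen (P.listStars A) :=
  (P.isStarIdeal_gen _).mem_of_le (P.subset_gen (P.listStars A) ⟨[], by simp, rfl⟩)
    (P.one_le_star _)

theorem image2_mul_gen_listStars_subset (A : Set K) :
    Set.image2 P.mul A (P.gen (P.listStars A)) ⊆ P.gen (P.listStars A) :=
  (P.isStarIdeal_gen _).image2_gen_right_subset <| by
    rintro _ ⟨a, ha, _, ⟨l, hl, rfl⟩, rfl⟩
    exact (P.isStarIdeal_gen _).mem_of_le
      (P.subset_gen _ ⟨a :: l, List.forall_mem_cons.2 ⟨ha, hl⟩, rfl⟩)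
      (P.mul_le_listStar (P.le_listStar List.mem_cons_self)
        (P.listStar_mono (List.subset_cons_self a l)))

theorem image2_gen_listStars_mul_subset (A : Set K) :
    Set.image2 P.mul (P.gen (P.listStars A)) A ⊆ P.gen (P.listStars A) :=
  (P.isStarIdeal_gen _).image2_gen_left_subset <| by
    rintro _ ⟨_, ⟨l, hl, rfl⟩, a, ha, rfl⟩
    exact (P.isStarIdeal_gen _).mem_of_le
      (P.subset_gen _
        ⟨l ++ [a], List.forall_mem_append.2 ⟨hl, List.forall_mem_singleton.2 ha⟩, rfl⟩)
      (P.mul_le_listStar (P.listStar_mono (List.subset_append_left l [a]))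
        (P.le_listStar (List.mem_append_right l (List.mem_singleton_self a))))

variable {P}

theorem IsStarIdeal.image2_gen_listStars_left_subset {A L : Set K} (hL : P.IsStarIdeal L)
    (h : Set.image2 P.mul A L ⊆ L) : Set.image2 P.mul (P.gen (P.listStars A)) L ⊆ L :=
  hL.image2_gen_left_subset <| by
    rintro _ ⟨_, ⟨l, hl, rfl⟩, b, hb, rfl⟩
    have hsand : P.SandwichMem L A P.one b := fun p hp => by
      simpa only [P.one_mul] using hp.mul_mem h hb
    simpa only [P.one_mul] using hsand.mul_listStar_mul_mem hL hl

theorem IsStarIdeal.image2_gen_listStars_right_subset {A L : Set K} (hL : P.IsStarIdeal L)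
    (h : Set.image2 P.mul L A ⊆ L) : Set.image2 P.mul L (P.gen (P.listStars A)) ⊆ L :=
  hL.image2_gen_right_subset <| by
    rintro _ ⟨c, hc, _, ⟨l, hl, rfl⟩, rfl⟩
    have hsand : P.SandwichMem L A c P.one := fun p hp => by
      simpa only [P.mul_one] using hp.mem_mul h hc
    simpa only [P.mul_one] using hsand.mul_listStar_mul_mem hL hl

theorem gen_listStars_gen_eq (hc : P.StarContinuous) (l : List K) :
    P.gen (P.listStars (P.gen {x | x ∈ l})) = P.gen {P.listStar l} := by
  have hle : P.gen {x | x ∈ l} ⊆ {x | P.le x (P.listStar l)} :=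
    (isStarIdeal_setOf_le hc _).gen_subset fun _ hx => P.le_listStar hx
  refine ((P.isStarIdeal_gen _).gen_subset ?_).antisymm
    (P.gen_mono (Set.singleton_subset_iff.2 ⟨l, fun _ hy => P.subset_gen _ hy, rfl⟩))
  rintro _ ⟨l', hl', rfl⟩
  exact (P.isStarIdeal_gen _).mem_of_le (P.subset_gen _ rfl)
    (P.listStar_le_star fun y hy => hle (hl' y hy))

variable (P)

abbrev TK : Type _ := {I : Set K // ∃ l : List K, I = P.gen {x | x ∈ l}}

theorem exists_list_gen_eq {A : Set K} (hA : A.Finite) :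
    ∃ l : List K, P.gen A = P.gen {x | x ∈ l} :=
  let ⟨l, hl⟩ := hA.exists_list_eq
  ⟨l, by rw [hl]⟩

namespace TK

variable {P}

theorem isStarIdeal (I : P.TK) : P.IsStarIdeal I.1 :=
  let ⟨_, hl⟩ := I.2
  hl ▸ P.isStarIdeal_gen _

theorem exists_finite (I : P.TK) : ∃ A : Set K, A.Finite ∧ I.1 = P.gen A :=
  let ⟨l, hl⟩ := I.2
  ⟨_, List.finite_toSet l, hl⟩

variable (P) in
def zero : P.TK := ⟨P.gen {P.zero}, P.exists_list_gen_eq (Set.finite_singleton _)⟩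

variable (P) in
def one : P.TK := ⟨P.gen {P.one}, P.exists_list_gen_eq (Set.finite_singleton _)⟩

def add (I J : P.TK) : P.TK :=
  ⟨P.gen (I.1 ∪ J.1), by
    obtain ⟨A, hA, hI⟩ := I.exists_finite
    obtain ⟨B, hB, hJ⟩ := J.exists_finite
    rw [hI, hJ, gen_union_gen_left, gen_union_gen_right]
    exact P.exists_list_gen_eq (hA.union hB)⟩

def mul (I J : P.TK) : P.TK :=
  ⟨P.gen (Set.image2 P.mul I.1 J.1), by
    obtain ⟨A, hA, hI⟩ := I.exists_finite
    obtain ⟨B, hB, hJ⟩ := J.exists_finite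
    rw [hI, hJ, gen_image2_gen_left, gen_image2_gen_right]
    exact P.exists_list_gen_eq (hA.image2 P.mul hB)⟩

def star (hc : P.StarContinuous) (I : P.TK) : P.TK :=
  ⟨P.gen (P.listStars I.1), by
    obtain ⟨l, hl⟩ := I.2
    rw [hl, gen_listStars_gen_eq hc]
    exact P.exists_list_gen_eq (Set.finite_singleton _)⟩

theorem coe_zero : (zero P).1 = P.gen {P.zero} := rfl

theorem coe_one : (one P).1 = P.gen {P.one} := rfl

theorem coe_add (I J : P.TK) : (add I J).1 = P.gen (I.1 ∪ J.1) := rfl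

theorem coe_mul (I J : P.TK) : (mul I J).1 = P.gen (Set.image2 P.mul I.1 J.1) := rfl

theorem add_eq_right_iff {I J : P.TK} : add I J = J ↔ I.1 ⊆ J.1 :=
  ⟨fun h => (Set.subset_union_left.trans (P.subset_gen _)).trans (congrArg Subtype.val h).subset,
    fun h => Subtype.ext <| (J.isStarIdeal.gen_subset (Set.union_subset h subset_rfl)).antisymm
      (Set.subset_union_right.trans (P.subset_gen _))⟩

def pka (hc : P.StarContinuous) : PKA P.TK where
  summable _ _ := True
  add := add
  mul := mul
  star := star hc
  zero := zero P
  one := one P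
  add_assoc _ _ _ _ _ _ := ⟨trivial, Subtype.ext <| by
    simp only [coe_add, gen_union_gen_left, gen_union_gen_right, Set.union_assoc]⟩
  add_comm _ _ _ := ⟨trivial, Subtype.ext <| by rw [coe_add, coe_add, Set.union_comm]⟩
  summable_zero _ := trivial
  add_zero x := Subtype.ext <| by
    rw [coe_add, coe_zero, gen_union_gen_right, Set.union_eq_self_of_subset_right
      (Set.singleton_subset_iff.2 x.isStarIdeal.zero_mem), x.isStarIdeal.gen_eq]
  summable_self _ := trivial
  add_self x := Subtype.ext <| by rw [coe_add, Set.union_self, x.isStarIdeal.gen_eq]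
  mul_assoc _ _ _ := Subtype.ext <| by
    simp only [coe_mul, gen_image2_gen_left, gen_image2_gen_right]
    rw [Set.image2_assoc fun a b c => (P.mul_assoc a b c).symm]
  one_mul x := Subtype.ext <| by
    rw [coe_mul, coe_one, gen_image2_gen_left, Set.image2_singleton_left,
      show P.mul P.one = id from funext P.one_mul, Set.image_id, x.isStarIdeal.gen_eq]
  mul_one x := Subtype.ext <| by
    rw [coe_mul, coe_one, gen_image2_gen_right, Set.image2_singleton_right,
      show (P.mul · P.one) = id from funext P.mul_one, Set.image_id, x.isStarIdeal.gen_eq]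
  left_distrib _ _ _ _ := ⟨trivial, Subtype.ext <| by
    simp only [coe_add, coe_mul, gen_image2_gen_right, gen_union_gen_left,
      gen_union_gen_right, Set.image2_union_right]⟩
  right_distrib _ _ _ _ := ⟨trivial, Subtype.ext <| by
    simp only [coe_add, coe_mul, gen_image2_gen_left, gen_union_gen_left,
      gen_union_gen_right, Set.image2_union_left]⟩
  zero_mul x := Subtype.ext <| by
    rw [coe_mul, coe_zero, gen_image2_gen_left, Set.image2_singleton_left,
      show P.mul P.zero = fun _ => P.zero from funext P.zero_mul,
      x.isStarIdeal.1.image_const]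
  mul_zero x := Subtype.ext <| by
    rw [coe_mul, coe_zero, gen_image2_gen_right, Set.image2_singleton_right,
      show (P.mul · P.zero) = fun _ => P.zero from funext P.mul_zero,
      x.isStarIdeal.1.image_const]
  one_le_star x := ⟨trivial, add_eq_right_iff.2 <| (P.isStarIdeal_gen _).gen_subset <|
    Set.singleton_subset_iff.2 (P.one_mem_gen_listStars x.1)⟩
  mul_star_le_star x := ⟨trivial, add_eq_right_iff.2 <|
    (P.isStarIdeal_gen _).gen_subset (P.image2_mul_gen_listStars_subset x.1)⟩
  star_mul_le_star x := ⟨trivial, add_eq_right_iff.2 <|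
    (P.isStarIdeal_gen _).gen_subset (P.image2_gen_listStars_mul_subset x.1)⟩
  star_ind_left _ x h := ⟨trivial, add_eq_right_iff.2 <| x.isStarIdeal.gen_subset <|
    x.isStarIdeal.image2_gen_listStars_left_subset <|
      (P.subset_gen _).trans (add_eq_right_iff.1 h.2)⟩
  star_ind_right _ x h := ⟨trivial, add_eq_right_iff.2 <| x.isStarIdeal.gen_subset <|
    x.isStarIdeal.image2_gen_listStars_right_subset <|
      (P.subset_gen _).trans (add_eq_right_iff.1 h.2)⟩

variable (hc : P.StarContinuous)

theorem pka_le_iff {I J : P.TK} : (pka hc).le I J ↔ I.1 ⊆ J.1 :=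
  ⟨fun h => add_eq_right_iff.1 h.2, fun h => ⟨trivial, add_eq_right_iff.2 h⟩⟩

theorem exists_mem_pka_pow {J : P.TK} {p : K} (hp : P.IsWordOver J.1 p) :
    ∃ n, p ∈ ((pka hc).pow J n).1 := by
  induction hp with
  | one => exact ⟨0, P.subset_gen _ rfl⟩
  | mul hx _ ih =>
    obtain ⟨n, hn⟩ := ih
    exact ⟨n + 1, P.subset_gen _ (Set.mem_image2_of_mem hx hn)⟩

theorem pka_starContinuous : (pka hc).StarContinuous := by
  intro I J L
  refine ⟨fun n => (pka hc).mul_le_mul_left I ((pka hc).mul_le_mul_right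
    ((pka hc).pow_le_star J n) L), fun N hN => (pka_le_iff hc).2 ?_⟩
  change P.gen (Set.image2 P.mul I.1 (P.gen (Set.image2 P.mul (P.gen (P.listStars J.1)) L.1)))
    ⊆ N.1
  rw [gen_image2_gen_left, gen_image2_gen_right]
  refine N.isStarIdeal.gen_subset ?_
  rintro _ ⟨a, ha, _, ⟨_, ⟨l, hl, rfl⟩, c, hcL, rfl⟩, rfl⟩
  refine SandwichMem.mul_listStar_mul_mem N.isStarIdeal hl fun p hp => ?_
  obtain ⟨n, hn⟩ := exists_mem_pka_pow hc hp
  exact (pka_le_iff hc).1 (hN n) <| P.subset_gen _ <| Set.mem_image2_of_mem ha <|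
    P.subset_gen _ (Set.mem_image2_of_mem hn hcL)

end TK

end PKA

/-- The set TK of finitely generated star-ideals of K, with the operations
gen A + gen B = gen (A ∪ B), gen A · gen B = gen (A ⊙ B),
(gen {a_1,…,a_k})* = gen {(a_1*·…·a_k*)*}, 0 = gen {0}, 1 = gen {1},
is a star-continuous total Kleene algebra whose order is subset inclusion;
in particular 1 + I·I* ≤ I*, J + I·L ≤ L implies I*·J ≤ L, and
I·J^n·L ≤ N for all n implies I·J*·L ≤ N. -/
theorem pka_TK_is_starCont_KA {K : Type*} (P : PKA K) (h : P.StarContinuous) :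
    ∃ Q : PKA {I : Set K // ∃ l : List K, I = P.gen {x | x ∈ l}},
      (∀ I J, Q.summable I J) ∧
      Q.StarContinuous ∧
      (∀ I J, Q.le I J ↔ (I : Set K) ⊆ (J : Set K)) ∧
      (Q.zero : Set K) = P.gen {P.zero} ∧
      (Q.one : Set K) = P.gen {P.one} ∧
      (∀ I J, (Q.add I J : Set K) = P.gen ((I : Set K) ∪ (J : Set K))) ∧
      (∀ I J, (Q.mul I J : Set K) = P.gen (Set.image2 P.mul (I : Set K) (J : Set K))) ∧
      (∀ l : List K,
        (Q.star ⟨P.gen {x | x ∈ l}, ⟨l, rfl⟩⟩ : Set K) = P.gen {P.listStar l}) ∧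
      (∀ I, Q.le (Q.add Q.one (Q.mul I (Q.star I))) (Q.star I)) ∧
      (∀ I J L, Q.le (Q.add J (Q.mul I L)) L → Q.le (Q.mul (Q.star I) J) L) ∧
      (∀ I J L N, (∀ n, Q.le (Q.mul I (Q.mul (Q.pow J n) L)) N) →
        Q.le (Q.mul I (Q.mul (Q.star J) L)) N) := by
  let Q := PKA.TK.pka h
  exact ⟨Q, fun _ _ => trivial, PKA.TK.pka_starContinuous h, fun _ _ => PKA.TK.pka_le_iff h,
    rfl, rfl, fun _ _ => rfl, fun _ _ => rfl, P.gen_listStars_gen_eq h,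
    fun I => Q.add_le (Q.one_le_star I) (Q.mul_star_le_star I) trivial,
    fun _ _ _ => Q.star_mul_le_of_add_mul_le trivial,
    fun I J L N => (PKA.TK.pka_starContinuous h I J L).2 N⟩
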